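/- Two geodesic rays γ, γ' in DL_2(q) (based at the origin) are asymptotic if and only if for each i ∈ {0,1}, the projections γ^(i) and γ'^(i) converge to the same end of the tree T_i. -/

import Mathlib

/-- A vertex of the (q+1)-regular tree with a distinguished end, in the
horocyclic model: a height `k ∈ ℤ` together with a finitely supported
labelling of the levels strictly below `k`. -/
structure TreeVert (q : ℕ) where
  height : ℤ
  labels : ℤ → ℕ
  labels_lt : ∀ n, labels n = 0 ∨ labels n < q
  supp_below : ∀ n, height ≤ n → labels n = 0
  fin_supp : (Function.support labels).Finite

namespace DL

variable {q d : ℕ}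

/-- `v` is a child of `u` (one step further from the distinguished end). -/
abbrev treeAdjUp (u v : TreeVert q) : Prop :=
  v.height = u.height + 1 ∧ ∀ n, n ≠ u.height → v.labels n = u.labels n

/-- The (q+1)-regular tree. -/
def TreeGraph (q : ℕ) : SimpleGraph (TreeVert q) where
  Adj u v := treeAdjUp u v ∨ treeAdjUp v u
  symm := ⟨fun u v h => Or.symm h⟩
  loopless := by
    constructor
    intro u h
    rcases h with ⟨h1, _⟩ | ⟨h1, _⟩ <;> omega

/-- The base vertex of the tree. -/
def treeOrigin (q : ℕ) : TreeVert q :=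
  ⟨0, fun _ => 0, fun _ => Or.inl rfl, fun _ _ => rfl, by simp⟩

/-- Vertices of the Diestel–Leader graph `DL_d(q)`:
`d`-tuples of tree vertices whose heights sum to zero. -/
def DLVert (d q : ℕ) : Type :=
  {x : Fin d → TreeVert q // (∑ i, (x i).height) = 0}

/-- The Diestel–Leader graph `DL_d(q)`: an edge ascends in one tree and
descends in another, all other coordinates being fixed. -/
def DLGraph (d q : ℕ) : SimpleGraph (DLVert d q) where
  Adj v w := ∃ i j : Fin d, i ≠ j ∧ treeAdjUp (v.1 i) (w.1 i) ∧ treeAdjUp (w.1 j) (v.1 j) ∧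
      ∀ k : Fin d, k ≠ i → k ≠ j → v.1 k = w.1 k
  symm := by
    constructor
    rintro v w ⟨i, j, hij, h1, h2, h3⟩
    exact ⟨j, i, hij.symm, h2, h1, fun k hk1 hk2 => (h3 k hk2 hk1).symm⟩
  loopless := by
    constructor
    rintro v ⟨i, j, hij, ⟨h1, _⟩, _⟩
    omega

/-- The base point of `DL_d(q)`. -/
def origin (d q : ℕ) : DLVert d q :=
  ⟨fun _ => treeOrigin q, by simp [treeOrigin]⟩

/-- A geodesic ray in `DL_d(q)` : an isometric embedding of `ℕ`. -/
def IsGeodesicRay (γ : ℕ → DLVert d q) : Prop :=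
  ∀ m n : ℕ, m ≤ n → (DLGraph d q).dist (γ m) (γ n) = n - m

/-- Two rays are asymptotic when they stay at uniformly bounded distance. -/
def Asymptotic (γ γ' : ℕ → DLVert d q) : Prop :=
  ∃ C : ℕ, ∀ n : ℕ, (DLGraph d q).dist (γ n) (γ' n) ≤ C

instance : TopologicalSpace (DLVert d q) := ⊥

/-- Geodesic rays emanating from the origin, with the topology of uniform
convergence on compact sets (= pointwise convergence, the vertex set being
discrete). -/
def RaySpace (d q : ℕ) : Type :=
  {γ : ℕ → DLVert d q // IsGeodesicRay γ ∧ γ 0 = origin d q}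

instance : TopologicalSpace (RaySpace d q) := by
  unfold RaySpace; infer_instance

lemma reachable_origin (γ : RaySpace d q) (n : ℕ) :
    (DLGraph d q).Reachable (origin d q) (γ.1 n) := by
  cases n with
  | zero => rw [γ.2.2]
  | succ n =>
    have h := γ.2.1 0 (n + 1) (Nat.zero_le _)
    have hne : (DLGraph d q).dist (γ.1 0) (γ.1 (n + 1)) ≠ 0 := by
      rw [h]; omega
    have := SimpleGraph.Reachable.of_dist_ne_zero hne
    rwa [γ.2.2] at this

/-- Asymptoticity as an equivalence relation on geodesic rays from the origin. -/
def asympSetoid (d q : ℕ) : Setoid (RaySpace d q) where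
  r γ γ' := Asymptotic γ.1 γ'.1
  iseqv := by
    constructor
    · intro γ
      exact ⟨0, fun n => by simp [SimpleGraph.dist_self]⟩
    · rintro γ γ' ⟨C, hC⟩
      exact ⟨C, fun n => by rw [SimpleGraph.dist_comm]; exact hC n⟩
    · rintro a b c ⟨C1, h1⟩ ⟨C2, h2⟩
      refine ⟨C1 + C2, fun n => ?_⟩
      have hab : (DLGraph d q).Reachable (a.1 n) (b.1 n) :=
        (reachable_origin a n).symm.trans (reachable_origin b n)
      have hbc : (DLGraph d q).Reachable (b.1 n) (c.1 n) :=
        (reachable_origin b n).symm.trans (reachable_origin c n)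
      obtain ⟨p, hp⟩ := hab.exists_walk_length_eq_dist
      obtain ⟨p', hp'⟩ := hbc.exists_walk_length_eq_dist
      calc (DLGraph d q).dist (a.1 n) (c.1 n) ≤ (p.append p').length :=
            SimpleGraph.dist_le _
        _ = (DLGraph d q).dist (a.1 n) (b.1 n) + (DLGraph d q).dist (b.1 n) (c.1 n) := by
            rw [SimpleGraph.Walk.length_append, hp, hp']
        _ ≤ C1 + C2 := Nat.add_le_add (h1 n) (h2 n)

/-- The visual boundary of `DL_d(q)`: asymptotic classes of geodesic rays
from the origin, with the quotient topology. -/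
def Boundary (d q : ℕ) : Type := Quotient (asympSetoid d q)

instance : TopologicalSpace (Boundary d q) := by
  unfold Boundary; infer_instance

/-- A ray in `DL_2(q)` descends for exactly `n` steps in tree `i`
(bottoming out at height `-n`), then ascends forever in tree `i`.
For `n = 0` this says the ray ascends forever in tree `i` with no turn. -/
def DescendsExactly (i : Fin 2) (n : ℕ) (γ : ℕ → DLVert 2 q) : Prop :=
  (∀ t : ℕ, t ≤ n → ((γ t).1 i).height = -(t : ℤ)) ∧
  (∀ t : ℕ, n ≤ t → ((γ t).1 i).height = (t : ℤ) - 2 * n)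

/-- The subset `C_n^i` of the boundary: classes of rays bottoming out in
tree `i` after descending exactly `n` edges. -/
def Cset (q : ℕ) (i : Fin 2) (n : ℕ) : Set (Boundary 2 q) :=
  {x | ∃ γ : RaySpace 2 q, Quotient.mk (asympSetoid 2 q) γ = x ∧ DescendsExactly i n γ.1}

/-- Projection of a path in `DL_d(q)` to the `i`-th tree. -/
def proj (i : Fin d) (γ : ℕ → DLVert d q) : ℕ → TreeVert q := fun n => (γ n).1 i

/-- Two (lazy) paths in the tree converge to the same end: both eventually
leave every ball, and they come within a uniformly bounded distance of each
other at arbitrarily late times. -/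
def SameEnd (a b : ℕ → TreeVert q) : Prop :=
  (∀ R : ℕ, ∃ N : ℕ, ∀ n, N ≤ n → R ≤ (TreeGraph q).dist (a 0) (a n)) ∧
  (∀ R : ℕ, ∃ N : ℕ, ∀ n, N ≤ n → R ≤ (TreeGraph q).dist (b 0) (b n)) ∧
  (∃ C : ℕ, ∀ N : ℕ, ∃ m n, N ≤ m ∧ N ≤ n ∧ (TreeGraph q).dist (a m) (b n) ≤ C)

/-- The step from `p m` to `p (m+1)` descends in tree `i`. -/
def StepDown (i : Fin d) (p : ℕ → DLVert d q) (m : ℕ) : Prop :=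
  treeAdjUp ((p (m + 1)).1 i) ((p m).1 i)

/-- The step from `p m` to `p (m+1)` ascends in tree `i`. -/
def StepUp (i : Fin d) (p : ℕ → DLVert d q) (m : ℕ) : Prop :=
  treeAdjUp ((p m).1 i) ((p (m + 1)).1 i)

/-- A turn in tree `i`: a subpath beginning with a descent in `T_i` at step `t`,
ending with an ascent in `T_i` at step `s`, with no intervening step
involving `T_i`. -/
def IsTurn (i : Fin d) (p : ℕ → DLVert d q) (t s : ℕ) : Prop :=
  t < s ∧ StepDown i p t ∧ StepUp i p s ∧
    ∀ m, t < m → m < s → (p (m + 1)).1 i = (p m).1 i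

/-!
Along a geodesic ray from the origin the height `H` in `T_0` (the negative of the height in `T_1`)
is a `±1` walk. Going from the origin down to the lowest height `m` visited, up to the highest `M`
and back to `γ n` takes `2 (M - m) - |H n|` steps, so `d(o, γ n) = n` forces every step away from
height `0` to reach a new extreme. Such a walk turns at most once: the ray descends `a` steps in one
tree `T_i` and then ascends there forever, while in the other tree it climbs `a` steps and then runs
down the line of the origin towards `ω`. Rays whose projections share their ends therefore turn in
the same tree, and from time `2a` on they lie on a common line of `DL_2(q)`, `2 |a - a'|` apart.
-/

end DL

namespace SimpleGraph

variable {V W : Type*} {G : SimpleGraph V} {G' : SimpleGraph W}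

theorem dist_map_le (f : G →g G') {u v : V} (h : G.Reachable u v) :
    G'.dist (f u) (f v) ≤ G.dist u v := by
  obtain ⟨p, hp⟩ := h.exists_walk_length_eq_dist
  exact hp ▸ (p.length_map f) ▸ dist_le (p.map f)

theorem exists_walk_length_eq_natAbs {f : ℤ → V} (hf : ∀ k, G.Adj (f k) (f (k + 1))) (j k : ℤ) :
    ∃ p : G.Walk (f j) (f k), p.length = (k - j).natAbs := by
  have up : ∀ (j : ℤ) (n : ℕ), ∃ p : G.Walk (f j) (f (j + n)), p.length = n := by
    intro j n
    induction n with
    | zero => exact ⟨Walk.nil.copy rfl (by simp), by simp⟩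
    | succ n ih =>
      obtain ⟨p, hp⟩ := ih
      exact ⟨(p.concat (hf _)).copy rfl (by push_cast; ring_nf), by simp [hp]⟩
  rcases le_total j k with hjk | hkj
  · obtain ⟨n, rfl⟩ := Int.le.dest hjk
    obtain ⟨p, hp⟩ := up j n
    exact ⟨p, by omega⟩
  · obtain ⟨n, rfl⟩ := Int.le.dest hkj
    obtain ⟨p, hp⟩ := up k n
    exact ⟨p.reverse, by simp [hp]⟩

end SimpleGraph

namespace DL

variable {q : ℕ}

attribute [ext] TreeVert

/-- The vertex at height `k` on the line from the distinguished end through `u`: the ancestor of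
`u` when `k ≤ u.height`, and otherwise the descendant of `u` reached through children labelled
`0`. -/
def trunc (k : ℤ) (u : TreeVert q) : TreeVert q where
  height := k
  labels n := if n < k then u.labels n else 0
  labels_lt n := by
    split_ifs
    exacts [u.labels_lt n, Or.inl rfl]
  supp_below n hn := if_neg (not_lt.mpr hn)
  fin_supp := u.fin_supp.subset fun n hn => by
    simp only [Function.mem_support, ne_eq, ite_eq_right_iff, Classical.not_imp] at hn ⊢
    exact hn.2

@[simp] theorem trunc_height (k : ℤ) (u : TreeVert q) : (trunc k u).height = k := rfl

theorem trunc_labels (k : ℤ) (u : TreeVert q) (n : ℤ) :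
    (trunc k u).labels n = if n < k then u.labels n else 0 := rfl

theorem trunc_congr {k : ℤ} {u v : TreeVert q} (h : ∀ n < k, u.labels n = v.labels n) :
    trunc k u = trunc k v := by
  ext n
  · rfl
  · simp only [trunc_labels]
    split_ifs with hn
    exacts [h n hn, rfl]

theorem trunc_self (u : TreeVert q) : trunc u.height u = u := by
  ext n
  · rfl
  · rw [trunc_labels, ite_eq_left_iff, not_lt]
    exact fun hn => (u.supp_below n hn).symm

theorem treeAdjUp_trunc (k : ℤ) (u : TreeVert q) : treeAdjUp (trunc k u) (trunc (k + 1) u) := by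
  refine ⟨rfl, fun n hn => ?_⟩
  simp only [trunc_labels, trunc_height] at hn ⊢
  split_ifs <;> first | rfl | omega

theorem labels_eq_of_adj {u v : TreeVert q} (h : (TreeGraph q).Adj u v) {k : ℤ}
    (hu : k < u.height) (hv : k < v.height) : u.labels k = v.labels k := by
  rcases h with ⟨-, h⟩ | ⟨-, h⟩
  exacts [(h k hu.ne).symm, h k hv.ne]

theorem labels_eq_of_forall_lt_height {u : ℕ → TreeVert q}
    (hu : ∀ n, (TreeGraph q).Adj (u n) (u (n + 1))) {k : ℤ} {s n : ℕ} (hsn : s ≤ n)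
    (hk : ∀ t, s ≤ t → t ≤ n → k < (u t).height) : (u n).labels k = (u s).labels k := by
  induction n, hsn using Nat.le_induction with
  | base => rfl
  | succ n hsn ih =>
    rw [← ih fun t hst htn => hk t hst (by omega)]
    exact (labels_eq_of_adj (hu n) (hk n hsn (by omega)) (hk (n + 1) (by omega) le_rfl)).symm

theorem abs_height_sub_le_length {u v : TreeVert q} (p : (TreeGraph q).Walk u v) :
    |u.height - v.height| ≤ p.length := by
  induction p with
  | nil => simp
  | @cons u w v h p ih =>
    have huw : |u.height - w.height| ≤ 1 := by
      rw [abs_le]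
      rcases h with ⟨h, -⟩ | ⟨h, -⟩ <;> constructor <;> omega
    calc |u.height - v.height| ≤ |u.height - w.height| + |w.height - v.height| := abs_sub_le _ _ _
      _ ≤ (p.cons h).length := by rw [SimpleGraph.Walk.length_cons]; push_cast; linarith

theorem abs_height_sub_le_dist {u v : TreeVert q} (h : (TreeGraph q).Reachable u v) :
    |u.height - v.height| ≤ (TreeGraph q).dist u v := by
  obtain ⟨p, hp⟩ := h.exists_walk_length_eq_dist
  exact hp ▸ abs_height_sub_le_length p

theorem labels_eq_of_walk {u v : TreeVert q} (p : (TreeGraph q).Walk u v) {k : ℤ}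
    (hk : ∀ w ∈ p.support, k < w.height) : u.labels k = v.labels k := by
  induction p with
  | nil => rfl
  | @cons u w v h p ih =>
    simp only [SimpleGraph.Walk.support_cons, List.mem_cons, forall_eq_or_imp] at hk
    exact (labels_eq_of_adj h hk.1 (hk.2 w p.start_mem_support)).trans (ih hk.2)

/-- A walk between vertices whose labels differ at level `k` must go down to level `k`. -/
theorem height_sub_add_le_dist {u v : TreeVert q} (h : (TreeGraph q).Reachable u v) {k : ℤ}
    (hk : u.labels k ≠ v.labels k) :
    (u.height - k) + (v.height - k) ≤ (TreeGraph q).dist u v := by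
  classical
  obtain ⟨p, hp⟩ := h.exists_walk_length_eq_dist
  obtain ⟨w, hw, hwk⟩ : ∃ w ∈ p.support, w.height ≤ k := by
    by_contra! hlt
    exact hk (labels_eq_of_walk p hlt)
  have hlen := congrArg SimpleGraph.Walk.length (p.take_spec hw)
  rw [SimpleGraph.Walk.length_append] at hlen
  have h₁ := abs_height_sub_le_length (p.takeUntil w hw)
  have h₂ := abs_height_sub_le_length (p.dropUntil w hw)
  rw [abs_le] at h₁ h₂
  omega

theorem height_eq_neg_of_ne (x : DLVert 2 q) {i j : Fin 2} (hij : i ≠ j) :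
    (x.1 j).height = -(x.1 i).height := by
  have h := x.2
  rw [Fin.sum_univ_two] at h
  rcases (by omega : i = 0 ∧ j = 1 ∨ i = 1 ∧ j = 0) with ⟨rfl, rfl⟩ | ⟨rfl, rfl⟩ <;> omega

theorem DLVert.ext_of_ne {x y : DLVert 2 q} {i j : Fin 2} (hij : i ≠ j) (hi : x.1 i = y.1 i)
    (hj : x.1 j = y.1 j) : x = y :=
  Subtype.ext <| funext fun k => by rcases (by omega : k = i ∨ k = j) with rfl | rfl <;> assumption

/-- In `DL_2(q)` every edge moves both coordinates. -/
def projHom (i : Fin 2) : DLGraph 2 q →g TreeGraph q where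
  toFun x := x.1 i
  map_rel' := by
    rintro x y ⟨a, b, hab, ha, hb, -⟩
    rcases (by omega : i = a ∨ i = b) with rfl | rfl
    exacts [Or.inl ha, Or.inr hb]

theorem reachable_proj (i : Fin 2) {x y : DLVert 2 q} (h : (DLGraph 2 q).Reachable x y) :
    (TreeGraph q).Reachable (x.1 i) (y.1 i) :=
  h.map (projHom i)

theorem dist_proj_le (i : Fin 2) {x y : DLVert 2 q} (h : (DLGraph 2 q).Reachable x y) :
    (TreeGraph q).dist (x.1 i) (y.1 i) ≤ (DLGraph 2 q).dist x y :=
  SimpleGraph.dist_map_le (projHom i) h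

def line (i : Fin 2) (u v : TreeVert q) (k : ℤ) : DLVert 2 q :=
  ⟨fun j => if j = i then trunc k u else trunc (-k) v, by fin_cases i <;> simp [Fin.sum_univ_two]⟩

theorem line_apply_self (i : Fin 2) (u v : TreeVert q) (k : ℤ) : (line i u v k).1 i = trunc k u :=
  if_pos rfl

theorem line_apply_of_ne {i j : Fin 2} (hij : i ≠ j) (u v : TreeVert q) (k : ℤ) :
    (line i u v k).1 j = trunc (-k) v :=
  if_neg hij.symm

theorem line_adj (i : Fin 2) (u v : TreeVert q) (k : ℤ) :
    (DLGraph 2 q).Adj (line i u v k) (line i u v (k + 1)) := by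
  obtain ⟨j, hji⟩ := exists_ne i
  refine ⟨i, j, hji.symm, ?_, ?_, fun l hli hlj => by omega⟩
  · simpa only [line_apply_self] using treeAdjUp_trunc k u
  · simpa only [line_apply_of_ne hji.symm, neg_add, neg_add_cancel_right] using
      treeAdjUp_trunc (-(k + 1)) v

theorem dist_line_le (i : Fin 2) (u v : TreeVert q) (j k : ℤ) :
    (DLGraph 2 q).dist (line i u v j) (line i u v k) ≤ (k - j).natAbs := by
  obtain ⟨p, hp⟩ := SimpleGraph.exists_walk_length_eq_natAbs (line_adj i u v) j k
  exact hp ▸ SimpleGraph.dist_le p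

theorem eq_line {x : DLVert 2 q} {i j : Fin 2} (hij : i ≠ j) {u v : TreeVert q}
    (hu : ∀ n < (x.1 i).height, (x.1 i).labels n = u.labels n)
    (hv : ∀ n < (x.1 j).height, (x.1 j).labels n = v.labels n) :
    x = line i u v (x.1 i).height := by
  refine DLVert.ext_of_ne hij ?_ ?_
  · rw [line_apply_self, ← trunc_congr hu, trunc_self]
  · rw [line_apply_of_ne hij, ← height_eq_neg_of_ne x hij, ← trunc_congr hv, trunc_self]

/-- Go down to height `m` in tree `i` (while rising in the other tree), turn and go up to `M`,
then turn again and come back to `x`. -/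
theorem dist_origin_le {x : DLVert 2 q} {i j : Fin 2} (hij : i ≠ j) {m M : ℤ} (hm : m ≤ 0)
    (h0 : 0 ≤ (x.1 i).height) (hM : (x.1 i).height ≤ M)
    (hi : ∀ n < m, (x.1 i).labels n = 0) (hj : ∀ n < -M, (x.1 j).labels n = 0) :
    ((DLGraph 2 q).dist (origin 2 q) x : ℤ) ≤ 2 * (M - m) - (x.1 i).height := by
  set o := treeOrigin q
  have e₀ : origin 2 q = line i o o 0 := eq_line hij (fun _ _ => rfl) fun _ _ => rfl
  have e₁ : line i o o m = line i (x.1 i) o m := by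
    refine DLVert.ext_of_ne hij ?_ (by simp only [line_apply_of_ne hij])
    simp only [line_apply_self]
    exact trunc_congr fun n hn => (hi n hn).symm
  have e₂ : line i (x.1 i) o M = line i (x.1 i) (x.1 j) M := by
    refine DLVert.ext_of_ne hij (by simp only [line_apply_self]) ?_
    simp only [line_apply_of_ne hij]
    exact trunc_congr fun n hn => (hj n hn).symm
  have e₃ : line i (x.1 i) (x.1 j) (x.1 i).height = x :=
    (eq_line hij (fun _ _ => rfl) fun _ _ => rfl).symm
  obtain ⟨p₁, hp₁⟩ := SimpleGraph.exists_walk_length_eq_natAbs (line_adj i o o) 0 m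
  obtain ⟨p₂, hp₂⟩ := SimpleGraph.exists_walk_length_eq_natAbs (line_adj i (x.1 i) o) m M
  obtain ⟨p₃, hp₃⟩ :=
    SimpleGraph.exists_walk_length_eq_natAbs (line_adj i (x.1 i) (x.1 j)) M (x.1 i).height
  have h := SimpleGraph.dist_le
    ((p₁.copy e₀.symm e₁).append ((p₂.copy rfl e₂).append (p₃.copy rfl e₃)))
  simp only [SimpleGraph.Walk.length_append, SimpleGraph.Walk.length_copy, hp₁, hp₂, hp₃] at h
  omega

theorem abs_sub_le_sub_of_step {H : ℕ → ℤ} (hH : ∀ n, |H (n + 1) - H n| ≤ 1) {s t : ℕ}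
    (hst : s ≤ t) : |H t - H s| ≤ t - s := by
  induction t, hst using Nat.le_induction with
  | base => simp
  | succ t hst ih =>
    calc |H (t + 1) - H s| ≤ |H (t + 1) - H t| + |H t - H s| := abs_sub_le _ _ _
      _ ≤ ((t + 1 : ℕ) : ℤ) - s := by push_cast; linarith [hH t]

theorem two_mul_sub_le_add_abs {H : ℕ → ℤ} (hH : ∀ n, |H (n + 1) - H n| ≤ 1) (h₀ : H 0 = 0)
    {s t n : ℕ} (hs : s ≤ n) (ht : t ≤ n) : 2 * (H t - H s) ≤ n + |H n| := by
  have lip {x y : ℕ} (hxy : x ≤ y) := abs_le.mp (abs_sub_le_sub_of_step hH hxy)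
  have := le_abs_self (H n)
  have := neg_abs_le (H n)
  rcases le_total s t with hst | hts
  · have := lip (Nat.zero_le s); have := lip hst; have := lip ht
    push_cast at *
    linarith
  · have := lip (Nat.zero_le t); have := lip hts; have := lip hs
    push_cast at *
    linarith

/-- Models the heights of a geodesic ray in `T_0`. For the true extremes `m`, `M` of the past,
`le_spread` is an equality (`two_mul_sub_le_add_abs`). -/
structure IsTightWalk (H : ℕ → ℤ) : Prop where
  zero : H 0 = 0
  step : ∀ n, H (n + 1) = H n + 1 ∨ H (n + 1) = H n - 1
  le_spread : ∀ (n : ℕ) (m M : ℤ), (∀ t ≤ n, m ≤ H t ∧ H t ≤ M) → n + |H n| ≤ 2 * (M - m)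

def DescendsThenAscends (H : ℕ → ℤ) (a : ℕ) : Prop :=
  (∀ t ≤ a, H t = -t) ∧ ∀ t, a ≤ t → H t = t - 2 * a

namespace IsTightWalk

variable {H : ℕ → ℤ}

theorem neg (hH : IsTightWalk H) : IsTightWalk (-H) where
  zero := by simp [hH.zero]
  step n := by
    have := hH.step n
    simp only [Pi.neg_apply]
    omega
  le_spread n m M hb := by
    have h := hH.le_spread n (-M) (-m) fun t ht => by
      have := hb t ht
      simp only [Pi.neg_apply] at this
      constructor <;> linarith
    simp only [Pi.neg_apply, abs_neg]
    linarith

theorem abs_succ_sub_le (hH : IsTightWalk H) (n : ℕ) : |H (n + 1) - H n| ≤ 1 := by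
  rcases hH.step n with h | h <;> rw [h] <;> simp

/-- Away from `0`, every step reaches a new extreme. -/
theorem step_down_of_lt (hH : IsTightWalk H) {n t : ℕ} (hn : 0 ≤ H n) (ht : t ≤ n)
    (hlt : H n < H t) : H (n + 1) = H n - 1 := by
  refine (hH.step n).resolve_left fun hup => ?_
  obtain ⟨s₀, hs₀, hmin⟩ := (Finset.range (n + 1)).exists_min_image H ⟨0, by simp⟩
  obtain ⟨t₀, ht₀, hmax⟩ := (Finset.range (n + 1)).exists_max_image H ⟨0, by simp⟩
  simp only [Finset.mem_range, Nat.lt_succ_iff] at hs₀ ht₀ hmin hmax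
  have hspread := hH.le_spread (n + 1) (H s₀) (H t₀) fun r hr => by
    rcases Nat.lt_or_ge r (n + 1) with hr | hr
    · exact ⟨hmin r (by omega), hmax r (by omega)⟩
    · obtain rfl : r = n + 1 := by omega
      have := hmin n le_rfl
      have := hmax t ht
      constructor <;> omega
  have := two_mul_sub_le_add_abs hH.abs_succ_sub_le hH.zero hs₀ ht₀
  rw [hup, abs_of_nonneg (by omega)] at hspread
  rw [abs_of_nonneg hn] at this
  push_cast at hspread
  omega

theorem step_up_of_lt (hH : IsTightWalk H) {n t : ℕ} (hn : H n ≤ 0) (ht : t ≤ n)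
    (hlt : H t < H n) : H (n + 1) = H n + 1 := by
  have := hH.neg.step_down_of_lt (n := n) (by simp only [Pi.neg_apply]; omega) ht
    (by simp only [Pi.neg_apply]; omega)
  simp only [Pi.neg_apply] at this
  omega

/-- Rising from below would force the walk up to `0` and then in both directions at once. -/
theorem le_of_nonpos (hH : IsTightWalk H) {n s t : ℕ} (ht : t ≤ n) (hpos : 0 < H t)
    (hn : H n ≤ 0) (hs : s ≤ n) : H n ≤ H s := by
  by_contra! hsn
  induction hk : (-H n).toNat generalizing n with
  | zero =>
    have h₁ := hH.step_down_of_lt (by omega) ht (by omega)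
    have h₂ := hH.step_up_of_lt hn hs hsn
    omega
  | succ k ih =>
    have hup := hH.step_up_of_lt hn hs hsn
    exact ih (n := n + 1) (by omega) (by omega) (by omega) (by omega) (by omega)

theorem apply_add_eq_sub_of_peak (hH : IsTightWalk H) {b : ℕ} (hb₁ : 1 ≤ b)
    (hasc : ∀ t ≤ b, H t = t) (hb : H (b + 1) ≠ H b + 1) (k : ℕ) : H (b + k) = b - k := by
  induction k with
  | zero => simp [hasc b le_rfl]
  | succ k ih =>
    rcases hH.step (b + k) with hup | hdown
    · exfalso
      rcases Nat.eq_zero_or_pos k with rfl | hk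
      · exact hb hup
      rcases le_or_gt k b with hkb | hbk
      · have := hH.step_down_of_lt (n := b + k) (t := b) (by omega) (by omega)
          (by rw [ih, hasc b le_rfl]; omega)
        omega
      · have := hH.le_of_nonpos (n := b + k + 1) (s := b + k) (t := b) (by omega)
          (by rw [hasc b le_rfl]; omega) (by omega) (by omega)
        omega
    · rw [← add_assoc, hdown, ih]; push_cast; ring

theorem descendsThenAscends_of_one (hH : IsTightWalk H) (h₁ : H 1 = 1) :
    DescendsThenAscends H 0 ∨ ∃ b, DescendsThenAscends (-H) b := by
  by_cases hup : ∀ t, H (t + 1) = H t + 1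
  · left
    have hid (t : ℕ) : H t = t := by
      induction t with
      | zero => exact hH.zero
      | succ t ih => rw [hup, ih]; push_cast; ring
    exact ⟨fun t ht => by rw [hid]; omega, fun t _ => by rw [hid]; ring⟩
  right
  push Not at hup
  obtain ⟨b, hb, hbmin⟩ : ∃ b, H (b + 1) ≠ H b + 1 ∧ ∀ t < b, H (t + 1) = H t + 1 := by
    classical
    exact ⟨Nat.find hup, Nat.find_spec hup, fun t ht => not_ne_iff.mp (Nat.find_min hup ht)⟩
  have hasc (t : ℕ) (ht : t ≤ b) : H t = t := by
    induction t with
    | zero => exact hH.zero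
    | succ t ih => rw [hbmin t (by omega), ih (by omega)]; push_cast; ring
  have hb₁ : 1 ≤ b := by
    by_contra! hb₀
    obtain rfl : b = 0 := by omega
    exact hb (by rw [h₁, hH.zero]; rfl)
  refine ⟨b, fun t ht => by simp [hasc t ht], fun t ht => ?_⟩
  obtain ⟨k, rfl⟩ := Nat.exists_eq_add_of_le ht
  simp only [Pi.neg_apply, hH.apply_add_eq_sub_of_peak hb₁ hasc hb k]
  push_cast
  ring

theorem exists_descendsThenAscends (hH : IsTightWalk H) :
    ∃ a, DescendsThenAscends H a ∨ DescendsThenAscends (-H) a := by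
  rcases hH.step 0 with h | h
  · rcases hH.descendsThenAscends_of_one (by rw [h, hH.zero]; rfl) with h' | ⟨b, h'⟩
    exacts [⟨0, .inl h'⟩, ⟨b, .inr h'⟩]
  · rcases hH.neg.descendsThenAscends_of_one (by simp [h, hH.zero]) with h' | ⟨b, h'⟩
    exacts [⟨0, .inr h'⟩, ⟨b, .inl (by simpa using h')⟩]

end IsTightWalk

theorem Asymptotic.symm {d : ℕ} {γ γ' : ℕ → DLVert d q} (h : Asymptotic γ γ') :
    Asymptotic γ' γ :=
  let ⟨C, hC⟩ := h
  ⟨C, fun n => SimpleGraph.dist_comm (G := DLGraph d q) ▸ hC n⟩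

theorem SameEnd.symm {a b : ℕ → TreeVert q} (h : SameEnd a b) : SameEnd b a := by
  obtain ⟨ha, hb, C, hC⟩ := h
  refine ⟨hb, ha, C, fun N => ?_⟩
  obtain ⟨m, n, hm, hn, hd⟩ := hC N
  exact ⟨n, m, hn, hm, SimpleGraph.dist_comm (G := TreeGraph q) ▸ hd⟩

namespace IsGeodesicRay

section

variable {d : ℕ} {γ γ' : ℕ → DLVert d q}

theorem adj (hγ : IsGeodesicRay γ) (n : ℕ) : (DLGraph d q).Adj (γ n) (γ (n + 1)) :=
  SimpleGraph.dist_eq_one_iff_adj.mp (by rw [hγ n (n + 1) (by omega)]; omega)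

theorem reachable (hγ : IsGeodesicRay γ) (m n : ℕ) : (DLGraph d q).Reachable (γ m) (γ n) := by
  have h₀ (n : ℕ) : (DLGraph d q).Reachable (γ 0) (γ n) := by
    induction n with
    | zero => rfl
    | succ n ih => exact ih.trans (hγ.adj n).reachable
  exact (h₀ m).symm.trans (h₀ n)

theorem reachable_of_zero_eq (hγ : IsGeodesicRay γ) (hγ' : IsGeodesicRay γ') (h₀ : γ 0 = γ' 0)
    (m n : ℕ) : (DLGraph d q).Reachable (γ m) (γ' n) :=
  (hγ.reachable m 0).trans (h₀ ▸ hγ'.reachable 0 n)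

theorem asymptotic_of_eventually (hγ : IsGeodesicRay γ) (hγ' : IsGeodesicRay γ')
    (h₀ : γ 0 = γ' 0) {N C : ℕ} (h : ∀ n, N ≤ n → (DLGraph d q).dist (γ n) (γ' n) ≤ C) :
    Asymptotic γ γ' := by
  refine ⟨2 * N + C, fun n => ?_⟩
  rcases le_or_gt N n with hn | hn
  · exact (h n hn).trans (by omega)
  · have := (hγ.reachable n 0).dist_triangle_left (γ' n)
    rw [SimpleGraph.dist_comm (u := γ n) (v := γ 0), hγ 0 n (Nat.zero_le n), h₀,
      hγ' 0 n (Nat.zero_le n)] at this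
    omega

end

variable {γ : ℕ → DLVert 2 q}

theorem treeAdj (hγ : IsGeodesicRay γ) (i : Fin 2) (n : ℕ) :
    (TreeGraph q).Adj ((γ n).1 i) ((γ (n + 1)).1 i) :=
  (projHom i).map_adj (hγ.adj n)

theorem labels_eq_zero (hγ : IsGeodesicRay γ) (hγ0 : γ 0 = origin 2 q) {i : Fin 2} {k : ℤ}
    {n : ℕ} (hk : ∀ t ≤ n, k < ((γ t).1 i).height) : ((γ n).1 i).labels k = 0 := by
  rw [labels_eq_of_forall_lt_height (u := fun t => (γ t).1 i) (hγ.treeAdj i) (Nat.zero_le n)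
    fun t _ ht => hk t ht, hγ0]
  rfl

theorem add_height_le (hγ : IsGeodesicRay γ) (hγ0 : γ 0 = origin 2 q) {i j : Fin 2}
    (hij : i ≠ j) {n : ℕ} {m M : ℤ} (hn : 0 ≤ ((γ n).1 i).height)
    (hb : ∀ t ≤ n, m ≤ ((γ t).1 i).height ∧ ((γ t).1 i).height ≤ M) :
    n + ((γ n).1 i).height ≤ 2 * (M - m) := by
  have hm : m ≤ 0 := by simpa [hγ0, origin, treeOrigin] using (hb 0 (Nat.zero_le n)).1
  have h := dist_origin_le hij hm hn (hb n le_rfl).2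
    (fun k hk => hγ.labels_eq_zero hγ0 fun t ht => hk.trans_le (hb t ht).1)
    (fun k hk => hγ.labels_eq_zero hγ0 fun t ht => by
      rw [height_eq_neg_of_ne _ hij]
      linarith [(hb t ht).2])
  rw [← hγ0, hγ 0 n (Nat.zero_le n), Nat.sub_zero] at h
  linarith

theorem isTightWalk (hγ : IsGeodesicRay γ) (hγ0 : γ 0 = origin 2 q) :
    IsTightWalk fun n => ((γ n).1 0).height where
  zero := by rw [hγ0]; rfl
  step n := by
    rcases hγ.treeAdj 0 n with ⟨h, -⟩ | ⟨h, -⟩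
    exacts [.inl h, .inr (by omega)]
  le_spread n m M hb := by
    have h₁₀ (t : ℕ) := height_eq_neg_of_ne (γ t) (show (0 : Fin 2) ≠ 1 by decide)
    rcases le_total 0 ((γ n).1 0).height with hn | hn
    · rw [abs_of_nonneg hn]
      exact hγ.add_height_le hγ0 (j := 1) (by decide) hn hb
    · have := hγ.add_height_le hγ0 (i := 1) (j := 0) (n := n) (m := -M) (M := -m)
        (by decide) (by rw [h₁₀]; omega) fun t ht => by rw [h₁₀]; have := hb t ht; omega
      rw [h₁₀] at this
      rw [abs_of_nonpos hn]
      omega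

theorem exists_descendsExactly (hγ : IsGeodesicRay γ) (hγ0 : γ 0 = origin 2 q) :
    ∃ i a, DescendsExactly i a γ := by
  obtain ⟨a, h | h⟩ := (hγ.isTightWalk hγ0).exists_descendsThenAscends
  · exact ⟨0, a, h⟩
  · have e : (-fun n => ((γ n).1 0).height) = fun n => ((γ n).1 1).height :=
      funext fun n => by simp [height_eq_neg_of_ne (γ n) (show (0 : Fin 2) ≠ 1 by decide)]
    rw [e] at h
    exact ⟨1, a, h⟩

end IsGeodesicRay

namespace DescendsExactly

variable {γ γ' : ℕ → DLVert 2 q} {i i' : Fin 2} {a a' : ℕ}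

theorem height_of_ne (hD : DescendsExactly i a γ) {j : Fin 2} (hij : i ≠ j) {t : ℕ}
    (ht : a ≤ t) : ((γ t).1 j).height = 2 * a - t := by
  rw [height_eq_neg_of_ne _ hij, hD.2 t ht]
  ring

theorem dist_proj_escapes (hD : DescendsExactly i a γ) (hγ : IsGeodesicRay γ)
    (hγ0 : γ 0 = origin 2 q) (k : Fin 2) (R : ℕ) :
    ∃ N, ∀ n, N ≤ n → R ≤ (TreeGraph q).dist (proj k γ 0) (proj k γ n) := by
  refine ⟨2 * a + R, fun n hn => ?_⟩
  have h := abs_height_sub_le_dist (reachable_proj k (hγ.reachable 0 n))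
  have h₀ : ((γ 0).1 k).height = 0 := by rw [hγ0]; rfl
  have hk : |((γ n).1 k).height| = n - 2 * a := by
    rcases eq_or_ne i k with rfl | hik
    · rw [hD.2 n (by omega), abs_of_nonneg (by omega)]
    · rw [hD.height_of_ne hik (by omega), abs_of_nonpos (by omega)]
      ring
  rw [h₀, zero_sub, abs_neg, hk] at h
  simp only [proj]
  omega

theorem labels_eq_zero_of_ne (hD : DescendsExactly i a γ) (hγ : IsGeodesicRay γ)
    (hγ0 : γ 0 = origin 2 q) {j : Fin 2} (hij : i ≠ j) {t : ℕ} (ht : 2 * a ≤ t) (k : ℤ) :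
    ((γ t).1 j).labels k = 0 := by
  rcases lt_or_ge k (2 * a - t) with hk | hk
  · refine hγ.labels_eq_zero hγ0 fun s _ => ?_
    rw [height_eq_neg_of_ne _ hij]
    rcases le_total s a with hsa | has
    · rw [hD.1 s hsa]; omega
    · rw [hD.2 s has]; omega
  · exact ((γ t).1 j).supp_below k (by rw [hD.height_of_ne hij (by omega)]; exact hk)

theorem labels_eq (hD : DescendsExactly i a γ) (hγ : IsGeodesicRay γ) {s t : ℕ} (hat : a ≤ t)
    (hts : t ≤ s) {k : ℤ} (hk : k < t - 2 * a) : ((γ s).1 i).labels k = ((γ t).1 i).labels k :=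
  labels_eq_of_forall_lt_height (u := fun r => (γ r).1 i) (hγ.treeAdj i) hts
    fun r htr _ => by show k < ((γ r).1 i).height; rw [hD.2 r (by omega)]; omega

theorem eq_of_sameEnd (hD : DescendsExactly i a γ) (hD' : DescendsExactly i' a' γ')
    (hγ : IsGeodesicRay γ) (hγ' : IsGeodesicRay γ') (h₀ : γ 0 = γ' 0)
    (h : SameEnd (proj i γ) (proj i γ')) : i = i' := by
  by_contra hne
  obtain ⟨C, hC⟩ := h.2.2
  obtain ⟨m, n, hm, hn, hd⟩ := hC (2 * a + 2 * a' + C + 1)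
  have := abs_height_sub_le_dist (reachable_proj i (hγ.reachable_of_zero_eq hγ' h₀ m n))
  rw [hD.2 m (by omega), hD'.height_of_ne (Ne.symm hne) (by omega), abs_le] at this
  simp only [proj] at hd
  omega

/-- Bounded distance at late times forces the labels, frozen from time `t` on, to agree. -/
theorem labels_eq_of_sameEnd (hD : DescendsExactly i a γ) (hD' : DescendsExactly i a' γ')
    (hγ : IsGeodesicRay γ) (hγ' : IsGeodesicRay γ') (h₀ : γ 0 = γ' 0)
    (h : SameEnd (proj i γ) (proj i γ')) {t : ℕ} (hat : a ≤ t) (ha't : a' ≤ t) {k : ℤ}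
    (hk : k < t - 2 * a) (hk' : k < t - 2 * a') :
    ((γ t).1 i).labels k = ((γ' t).1 i).labels k := by
  by_contra hne
  obtain ⟨C, hC⟩ := h.2.2
  obtain ⟨m, n, hm, hn, hd⟩ := hC (t + C)
  rw [← hD.labels_eq hγ hat (s := m) (by omega) hk,
    ← hD'.labels_eq hγ' ha't (s := n) (by omega) hk'] at hne
  have := height_sub_add_le_dist (reachable_proj i (hγ.reachable_of_zero_eq hγ' h₀ m n)) hne
  rw [hD.2 m (by omega), hD'.2 n (by omega)] at this
  simp only [proj] at hd
  omega

theorem asymptotic (hD : DescendsExactly i a γ) (hD' : DescendsExactly i a' γ')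
    (hγ : IsGeodesicRay γ) (hγ' : IsGeodesicRay γ') (hγ0 : γ 0 = origin 2 q)
    (hγ'0 : γ' 0 = origin 2 q) (h : SameEnd (proj i γ) (proj i γ')) : Asymptotic γ γ' := by
  wlog hle : a' ≤ a generalizing γ γ' a a'
  · exact (this hD' hD hγ' hγ hγ'0 hγ0 h.symm (by omega)).symm
  refine hγ.asymptotic_of_eventually hγ' (hγ0.trans hγ'0.symm) (N := 2 * a) (C := 2 * (a - a'))
    fun t ht => ?_
  obtain ⟨j, hji⟩ := exists_ne i
  obtain ⟨u, hu⟩ : ∃ u, (γ' t).1 i = u := ⟨_, rfl⟩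
  have e : γ t = line i u (treeOrigin q) (t - 2 * a) := by
    rw [← hD.2 t (by omega)]
    refine eq_line hji.symm (fun n hn => ?_)
      fun n _ => hD.labels_eq_zero_of_ne hγ hγ0 hji.symm (by omega) n
    rw [← hu]
    rw [hD.2 t (by omega)] at hn
    exact hD.labels_eq_of_sameEnd hD' hγ hγ' (hγ0.trans hγ'0.symm) h (by omega) (by omega) hn
      (by omega)
  have e' : γ' t = line i u (treeOrigin q) (t - 2 * a') := by
    rw [← hD'.2 t (by omega), ← hu]
    exact eq_line hji.symm (fun _ _ => rfl)
      fun n _ => hD'.labels_eq_zero_of_ne hγ' hγ'0 hji.symm (by omega) n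
  rw [e, e']
  exact (dist_line_le i u _ _ _).trans (by omega)

end DescendsExactly

theorem asymptotic_iff_same_ends_general {q : ℕ} (γ γ' : ℕ → DLVert 2 q)
    (hγ : IsGeodesicRay γ) (hγ' : IsGeodesicRay γ')
    (hγ0 : γ 0 = origin 2 q) (hγ'0 : γ' 0 = origin 2 q) :
    Asymptotic γ γ' ↔ ∀ i : Fin 2, SameEnd (proj i γ) (proj i γ') := by
  obtain ⟨i, a, hD⟩ := hγ.exists_descendsExactly hγ0
  obtain ⟨i', a', hD'⟩ := hγ'.exists_descendsExactly hγ'0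
  have h₀ : γ 0 = γ' 0 := hγ0.trans hγ'0.symm
  constructor
  · rintro ⟨C, hC⟩ k
    refine ⟨hD.dist_proj_escapes hγ hγ0 k, hD'.dist_proj_escapes hγ' hγ'0 k, C,
      fun N => ⟨N, N, le_rfl, le_rfl, ?_⟩⟩
    exact (dist_proj_le k (hγ.reachable_of_zero_eq hγ' h₀ N N)).trans (hC N)
  · intro h
    obtain rfl := hD.eq_of_sameEnd hD' hγ hγ' h₀ (h i)
    exact hD.asymptotic hD' hγ hγ' hγ0 hγ'0 (h i)

/-- two geodesic rays from the origin of `DL_2(q)` are asymptotic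
iff, for each tree, their projections converge to the same end. -/
theorem asymptotic_iff_same_ends {q : ℕ} (hq : 2 ≤ q) (γ γ' : ℕ → DLVert 2 q)
    (hγ : IsGeodesicRay γ) (hγ' : IsGeodesicRay γ')
    (hγ0 : γ 0 = origin 2 q) (hγ'0 : γ' 0 = origin 2 q) :
    Asymptotic γ γ' ↔ ∀ i : Fin 2, SameEnd (proj i γ) (proj i γ') :=
  asymptotic_iff_same_ends_general γ γ' hγ hγ' hγ0 hγ'0

end DL
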